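/- Decay-rate bound on the MSE: assume W = V_K^H H^H H V_K is positive definite and let ℓ_max = max_{1≤i≤n} ℓ_i with ℓ_i = λ_{w,i}^{-1} v_i^H W^{-1} v_i. Then for every subset S ⊆ {1,…,n}, MSE(S) ≥ k² / ( trace(Λ^{-1} W^{-1}) + |S|·ℓ_max ). -/

import Mathlib

open Matrix Finset ComplexOrder

/-- The matrix `M(S) = Λ⁻¹ + ∑_{i ∈ S} λ_{w,i}⁻¹ v_i v_iᴴ`. -/
noncomputable def Mmat {n k : ℕ} (lam : Fin k → ℝ) (lw : Fin n → ℝ)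
    (v : Fin n → Fin k → ℂ) (S : Finset (Fin n)) : Matrix (Fin k) (Fin k) ℂ :=
  (Matrix.diagonal fun j => (lam j : ℂ))⁻¹ +
    ∑ i ∈ S, ((lw i : ℂ))⁻¹ • Matrix.vecMulVec (v i) (star (v i))

/-- The matrix `V_K` whose `i`-th row is `v_iᴴ`. -/
noncomputable def VKmat {n k : ℕ} (v : Fin n → Fin k → ℂ) : Matrix (Fin n) (Fin k) ℂ :=
  Matrix.of fun i j => star (v i j)

/-- The optimal interpolation error covariance `K*(S) = H V_K M(S)⁻¹ V_Kᴴ Hᴴ`. -/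
noncomputable def Kstar {n k m : ℕ} (lam : Fin k → ℝ) (lw : Fin n → ℝ)
    (v : Fin n → Fin k → ℂ) (H : Matrix (Fin m) (Fin n) ℂ) (S : Finset (Fin n)) :
    Matrix (Fin m) (Fin m) ℂ :=
  H * VKmat v * (Mmat lam lw v S)⁻¹ * (VKmat v)ᴴ * Hᴴ

/-- The interpolation mean-square error `MSE(S) = trace K*(S)`, a (nonnegative) real. -/
noncomputable def MSE {n k m : ℕ} (lam : Fin k → ℝ) (lw : Fin n → ℝ)
    (v : Fin n → Fin k → ℂ) (H : Matrix (Fin m) (Fin n) ℂ) (S : Finset (Fin n)) : ℝ :=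
  ((Kstar lam lw v H S).trace).re

/-!
By cyclicity of the trace, `MSE(S) = tr(M(S)⁻¹ W)`, while
`tr(M(S) W⁻¹) = tr(Λ⁻¹ W⁻¹) + ∑_{i ∈ S} ℓ_i ≤ tr(Λ⁻¹ W⁻¹) + |S| ℓ_max`.
For positive definite `A` and `B` one has `k² ≤ tr(A⁻¹ B) · tr(A B⁻¹)`: writing `B = Qᴴ Q`,
the matrix `C = Q A⁻¹ Qᴴ = R Rᴴ` satisfies `tr C = tr(A⁻¹ B)` and `tr C⁻¹ = tr(A B⁻¹)`,
and Cauchy–Schwarz for the Frobenius inner product gives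
`k = tr(R R⁻¹) ≤ ‖R‖_F ‖R⁻¹‖_F = (tr C · tr C⁻¹)^{1/2}`.
-/

section TraceInequalities

open scoped MatrixOrder

variable {ι 𝕜 : Type*} [Fintype ι] [DecidableEq ι] [RCLike 𝕜]

theorem Matrix.norm_trace_mul_conjTranspose_sq_le (X Y : Matrix ι ι 𝕜) :
    ‖(X * Yᴴ).trace‖ ^ 2 ≤ RCLike.re (X * Xᴴ).trace * RCLike.re (Y * Yᴴ).trace := by
  -- the inner product induced by the identity matrix is the Frobenius one, `⟪X, Y⟫ = tr(Y Xᴴ)`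
  let _ := (1 : Matrix ι ι 𝕜).toMatrixSeminormedAddCommGroup PosSemidef.one
  let _ := (1 : Matrix ι ι 𝕜).toMatrixInnerProductSpace PosSemidef.one
  have h : ‖(X * 1 * Yᴴ).trace‖ * ‖(Y * 1 * Xᴴ).trace‖ ≤
      RCLike.re (Y * 1 * Yᴴ).trace * RCLike.re (X * 1 * Xᴴ).trace :=
    inner_mul_inner_self_le (𝕜 := 𝕜) Y X
  have hswap : (Y * Xᴴ).trace = star (X * Yᴴ).trace := by
    rw [← trace_conjTranspose, conjTranspose_mul, conjTranspose_conjTranspose]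
  simp only [Matrix.mul_one, hswap, norm_star] at h
  rw [sq, mul_comm (RCLike.re _)]
  exact h

theorem Matrix.PosDef.card_sq_le_re_trace_mul_re_trace_inv {C : Matrix ι ι 𝕜} (hC : C.PosDef) :
    (Fintype.card ι : ℝ) ^ 2 ≤ RCLike.re C.trace * RCLike.re C⁻¹.trace := by
  obtain ⟨R, hR, rfl⟩ :=
    CStarAlgebra.isStrictlyPositive_iff_eq_mul_star_self.mp hC.isStrictlyPositive
  have hdet : IsUnit R.det := (isUnit_iff_isUnit_det R).mp hR
  have h := norm_trace_mul_conjTranspose_sq_le R (R⁻¹)ᴴ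
  rw [star_eq_conjTranspose]
  rwa [conjTranspose_conjTranspose, mul_nonsing_inv R hdet, trace_one, RCLike.norm_natCast,
    conjTranspose_nonsing_inv, ← Matrix.mul_inv_rev] at h

theorem Matrix.PosDef.card_sq_le_re_trace_inv_mul_mul_re_trace_mul_inv {A B : Matrix ι ι 𝕜}
    (hA : A.PosDef) (hB : B.PosDef) :
    (Fintype.card ι : ℝ) ^ 2 ≤ RCLike.re (A⁻¹ * B).trace * RCLike.re (A * B⁻¹).trace := by
  obtain ⟨Q, hQ, rfl⟩ :=
    CStarAlgebra.isStrictlyPositive_iff_eq_star_mul_self.mp hB.isStrictlyPositive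
  have hC : (Q * A⁻¹ * star Q).PosDef := (IsUnit.posDef_star_right_conjugate_iff hQ).mpr hA.inv
  have htrace : (Q * A⁻¹ * star Q).trace = (A⁻¹ * (star Q * Q)).trace := by
    rw [trace_mul_cycle, trace_mul_comm]
  have htrace_inv : (Q * A⁻¹ * star Q)⁻¹.trace = (A * (star Q * Q)⁻¹).trace := by
    rw [Matrix.mul_inv_rev, Matrix.mul_inv_rev,
      nonsing_inv_nonsing_inv A ((isUnit_iff_isUnit_det A).mp hA.isUnit), trace_mul_comm, Matrix.mul_assoc, ← Matrix.mul_inv_rev]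
  rw [← htrace, ← htrace_inv]
  exact hC.card_sq_le_re_trace_mul_re_trace_inv

end TraceInequalities

section InterpolationError

variable {n k m : ℕ} (lam : Fin k → ℝ) (lw : Fin n → ℝ) (v : Fin n → Fin k → ℂ)
  (H : Matrix (Fin m) (Fin n) ℂ) (S : Finset (Fin n))

theorem Mmat_posDef (hlam : ∀ j, 0 < lam j) (hlw : ∀ i, 0 < lw i) :
    (Mmat lam lw v S).PosDef := by
  refine (PosDef.diagonal fun j => Complex.zero_lt_real.2 (hlam j)).inv.add_posSemidef
    (posSemidef_sum S fun i _ => ?_)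
  exact (posSemidef_vecMulVec_self_star (v i)).smul
    (inv_nonneg.2 (Complex.zero_le_real.2 (hlw i).le))

theorem MSE_nonneg (hlam : ∀ j, 0 < lam j) (hlw : ∀ i, 0 < lw i) : 0 ≤ MSE lam lw v H S := by
  have hK : (Kstar lam lw v H S).PosSemidef := by
    rw [Kstar, Matrix.mul_assoc (H * VKmat v * _), ← conjTranspose_mul]
    exact (Mmat_posDef lam lw v S hlam hlw).inv.posSemidef.mul_mul_conjTranspose_same _
  exact (Complex.nonneg_iff.mp hK.trace_nonneg).1

theorem MSE_eq_re_trace_inv_mul :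
    MSE lam lw v H S = ((Mmat lam lw v S)⁻¹ * ((VKmat v)ᴴ * Hᴴ * H * VKmat v)).trace.re := by
  rw [MSE, Kstar, Matrix.mul_assoc (H * VKmat v * _), trace_mul_comm,
    trace_mul_comm (Mmat lam lw v S)⁻¹]
  simp only [Matrix.mul_assoc]

theorem trace_Mmat_mul (X : Matrix (Fin k) (Fin k) ℂ) :
    (Mmat lam lw v S * X).trace = ((diagonal fun j => (lam j : ℂ))⁻¹ * X).trace +
      ∑ i ∈ S, (lw i : ℂ)⁻¹ * (star (v i) ⬝ᵥ (X *ᵥ v i)) := by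
  simp only [Mmat, Matrix.add_mul, Finset.sum_mul, trace_add, trace_sum, smul_mul, trace_smul,
    vecMulVec_mul, trace_vecMulVec, smul_eq_mul, dotProduct_comm (v _), ← dotProduct_mulVec]

end InterpolationError

/-- Decay-rate bound on the MSE: if `W = V_Kᴴ Hᴴ H V_K` is positive
definite and `ℓ_max = max_i ℓ_i` with `ℓ_i = λ_{w,i}⁻¹ v_iᴴ W⁻¹ v_i`, then for every `S`,
`MSE(S) ≥ k² / (trace(Λ⁻¹ W⁻¹) + |S| · ℓ_max)`. -/
theorem MSE_decay_rate_lower_bound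
    (n k m : ℕ)
    (v : Fin n → Fin k → ℂ)
    (H : Matrix (Fin m) (Fin n) ℂ)
    (lam : Fin k → ℝ) (hlam : ∀ j, 0 < lam j)
    (lw : Fin n → ℝ) (hlw : ∀ i, 0 < lw i)
    (W : Matrix (Fin k) (Fin k) ℂ)
    (hWdef : W = (VKmat v)ᴴ * Hᴴ * H * VKmat v)
    (hW : W.PosDef)
    (ell : Fin n → ℝ)
    (hell : ∀ i, ell i = (lw i)⁻¹ * (star (v i) ⬝ᵥ (W⁻¹ *ᵥ v i)).re)
    (lmax : ℝ) (hlmax : IsGreatest (Set.range ell) lmax)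
    (S : Finset (Fin n)) :
    (k : ℝ) ^ 2 /
        ((((Matrix.diagonal fun j => (lam j : ℂ))⁻¹ * W⁻¹).trace).re + (S.card : ℝ) * lmax)
      ≤ MSE lam lw v H S := by
  set M := Mmat lam lw v S
  set D := (((diagonal fun j => (lam j : ℂ))⁻¹ * W⁻¹).trace).re + S.card * lmax
  have hcs : (k : ℝ) ^ 2 ≤ MSE lam lw v H S * (M * W⁻¹).trace.re := by
    simpa [MSE_eq_re_trace_inv_mul, ← hWdef] using
      (Mmat_posDef lam lw v S hlam hlw).card_sq_le_re_trace_inv_mul_mul_re_trace_mul_inv hW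
  have hsum : ∑ i ∈ S, ell i ≤ S.card * lmax := by
    simpa using Finset.sum_le_card_nsmul S ell lmax fun i _ => hlmax.2 ⟨i, rfl⟩
  have hb : (M * W⁻¹).trace.re ≤ D := by
    rw [trace_Mmat_mul, Complex.add_re, Complex.re_sum]
    refine add_le_add_right (le_of_eq_of_le (Finset.sum_congr rfl fun i _ => ?_) hsum) _
    rw [← Complex.ofReal_inv, Complex.re_ofReal_mul, hell]
  have hMSE := MSE_nonneg lam lw v H S hlam hlw
  rcases le_or_gt D 0 with hD | hD
  · exact (div_nonpos_of_nonneg_of_nonpos (sq_nonneg _) hD).trans hMSE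
  · rw [div_le_iff₀ hD]
    exact hcs.trans (mul_le_mul_of_nonneg_left hb hMSE)
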